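/- Let n be an odd prime and let A = (a_{i,j}) be the n×n matrix over Z_{3n²} defined by a_{i,j} = (−1)^{i+j}·(3n(j−1) + 3(i−1) + 1) for 1 ≤ j ≤ (n+1)/2 and a_{i,j} = (−1)^{i+j}·(3nj − 3i + 1) for (n+3)/2 ≤ j ≤ n. Then for every j ∈ [1,n] the sum of the entries of column j has additive order 3n² in Z_{3n²} (i.e. it is a unit of Z/3n²Z), and for every i ∈ [1,n] the sum of the entries of row i has additive order 3n² or 3n in Z_{3n²}. (This is the key computational claim underlying the paper's biembedding of K_{3×n²} whose faces have length 3n² or 3n³.) -/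

import Mathlib

/-!
Each line sum of `A` is an alternating sum of an arithmetic progression, hence equals `±c` for an
explicit integer `c ≡ 1 (mod 3)`. For a column, `2c ≡ -1 (mod n)`, so `c` is a unit modulo `3n²`.
For a row, the left block differs from the right-block formula by an alternating sum of a constant,
and `2c = 3n² + d` with `d` odd and `|d| < 3n ≤ n²`; so `n² ∤ c`, and `gcd(3n², c)` is `1` or `n`.
-/

open Finset

theorem ZMod.addOrderOf_intCast (c : ℤ) {N : ℕ} (hN : N ≠ 0) :
    addOrderOf (c : ZMod N) = N / N.gcd c.natAbs := by
  rcases Int.natAbs_eq c with h | h <;> conv_lhs => rw [h]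
  · rw [Int.cast_natCast, ZMod.addOrderOf_coe _ hN]
  · rw [Int.cast_neg, addOrderOf_neg, Int.cast_natCast, ZMod.addOrderOf_coe _ hN]

theorem Nat.gcd_mul_sq_eq_one_or_eq {p q a : ℕ} (hp : p.Prime) (hqa : q.Coprime a)
    (hp2 : ¬ p ^ 2 ∣ a) : (q * p ^ 2).gcd a = 1 ∨ (q * p ^ 2).gcd a = p := by
  rw [Nat.Coprime.gcd_mul_left_cancel _ hqa]
  obtain ⟨e, he, hgcd⟩ := (Nat.dvd_prime_pow hp).mp (Nat.gcd_dvd_left (p ^ 2) a)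
  interval_cases e
  · simp [hgcd]
  · simp [hgcd]
  · exact absurd (hgcd ▸ Nat.gcd_dvd_right _ _) hp2

theorem addOrderOf_neg_one_pow_mul {R : Type*} [Ring R] (s : ℕ) (x : R) :
    addOrderOf ((-1) ^ s * x) = addOrderOf x := by
  rcases neg_one_pow_eq_or R s with h | h <;> simp [h]

theorem addOrderOf_neg_one_pow_mul_intCast {p q : ℕ} (hp : p.Prime) (hq : q.Prime) (s : ℕ)
    {c : ℤ} (hqc : ¬ (q : ℤ) ∣ c) (hp2 : ¬ (p : ℤ) ^ 2 ∣ c) :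
    addOrderOf (((-1) ^ s * c : ℤ) : ZMod (q * p ^ 2)) = q * p ^ 2 ∨
      (addOrderOf (((-1) ^ s * c : ℤ) : ZMod (q * p ^ 2)) = q * p ∧ (p : ℤ) ∣ c) := by
  rw [Int.cast_mul, Int.cast_pow, Int.cast_neg, Int.cast_one, addOrderOf_neg_one_pow_mul,
    ZMod.addOrderOf_intCast c (by positivity [hp.pos, hq.pos])]
  rw [← Int.natCast_pow, Int.ofNat_dvd_left] at hp2
  rw [Int.ofNat_dvd_left] at hqc
  rcases Nat.gcd_mul_sq_eq_one_or_eq hp ((Nat.Prime.coprime_iff_not_dvd hq).mpr hqc) hp2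
    with h | h <;> rw [h]
  · simp
  · refine Or.inr ⟨?_, Int.ofNat_dvd_left.mpr (h ▸ Nat.gcd_dvd_right _ _)⟩
    rw [sq, ← mul_assoc, Nat.mul_div_cancel _ hp.pos]

theorem Int.not_dvd_of_dvd_mul_sub {m a c d : ℤ} (h : m ∣ a * c - d) (hd : d ≠ 0) (hlt : |d| < m) :
    ¬ m ∣ c := fun hc ↦
  hd (Int.eq_zero_of_abs_lt_dvd (by simpa using dvd_sub (hc.mul_left a) h) hlt)

theorem sum_Icc_neg_one_pow_mul_linear {R : Type*} [CommRing R] (k : ℕ) (a b : R) :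
    ∑ i ∈ Icc 1 (2 * k + 1), (-1) ^ i * (a * i + b) = -(a * (k + 1) + b) := by
  induction k with
  | zero => simp
  | succ k ih =>
    rw [show 2 * (k + 1) + 1 = 2 * k + 1 + 1 + 1 by ring, sum_Icc_succ_top (by omega),
      sum_Icc_succ_top (by omega), ih]
    simp only [pow_succ, pow_mul]
    push_cast
    ring

theorem sum_Icc_neg_one_pow {R : Type*} [Ring R] (m : ℕ) :
    ∑ j ∈ Icc 1 m, (-1 : R) ^ j = if Even m then 0 else -1 := by
  induction m with
  | zero => simp
  | succ m ih =>
    rw [sum_Icc_succ_top (by omega), ih]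
    rcases Nat.even_or_odd m with h | h
    · simp [h, Nat.even_add_one, h.add_one.neg_one_pow]
    · simp [Nat.not_even_iff_odd.mpr h, Nat.even_add_one, h.add_one.neg_one_pow]

def nhEntry (n i j : ℕ) : ℤ :=
  if j ≤ (n + 1) / 2 then (-1) ^ (i + j) * (3 * (n : ℤ) * ((j : ℤ) - 1) + 3 * ((i : ℤ) - 1) + 1)
  else (-1) ^ (i + j) * (3 * (n : ℤ) * j - 3 * (i : ℤ) + 1)

section

variable {n k : ℕ}

theorem sum_nhEntry_col_of_le (hk : n = 2 * k + 1) {j : ℕ} (hj : j ≤ k + 1) :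
    ∑ i ∈ Icc 1 n, nhEntry n i j = (-1) ^ (j + 1) * (3 * n * ((j : ℤ) - 1) + 3 * k + 1) := by
  subst hk
  calc ∑ i ∈ Icc 1 (2 * k + 1), nhEntry (2 * k + 1) i j
      = ∑ i ∈ Icc 1 (2 * k + 1),
          (-1) ^ j * ((-1) ^ i * (3 * i + (3 * (2 * k + 1 : ℕ) * ((j : ℤ) - 1) - 2))) :=
        sum_congr rfl fun i _ ↦ by rw [nhEntry, if_pos (by omega)]; ring
    _ = _ := by rw [← mul_sum, sum_Icc_neg_one_pow_mul_linear]; ring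

theorem sum_nhEntry_col_of_lt (hk : n = 2 * k + 1) {j : ℕ} (hj : k + 1 < j) :
    ∑ i ∈ Icc 1 n, nhEntry n i j = (-1) ^ (j + 1) * (3 * n * j - 3 * k - 2) := by
  subst hk
  calc ∑ i ∈ Icc 1 (2 * k + 1), nhEntry (2 * k + 1) i j
      = ∑ i ∈ Icc 1 (2 * k + 1),
          (-1) ^ j * ((-1) ^ i * (-3 * (i : ℤ) + (3 * (2 * k + 1 : ℕ) * j + 1))) :=
        sum_congr rfl fun i _ ↦ by rw [nhEntry, if_neg (by omega)]; ring
    _ = _ := by rw [← mul_sum, sum_Icc_neg_one_pow_mul_linear]; push_cast; ring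

theorem sum_nhEntry_row (hk : n = 2 * k + 1) (i : ℕ) :
    ∑ j ∈ Icc 1 n, nhEntry n i j = (-1) ^ i * ((6 * (i : ℤ) - 3 * n - 3) *
      ∑ j ∈ Icc 1 (k + 1), (-1) ^ j - (3 * n * (k + 1) + 1 - 3 * i)) := by
  subst hk
  have hsplit : ∀ j, nhEntry (2 * k + 1) i j =
      (-1) ^ i * ((-1) ^ j * (3 * (2 * k + 1 : ℕ) * j + (1 - 3 * (i : ℤ)))) +
        if j ≤ k + 1 then (-1) ^ i * ((6 * (i : ℤ) - 3 * (2 * k + 1 : ℕ) - 3) * (-1) ^ j)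
        else 0 := by
    intro j
    rw [nhEntry, show (2 * k + 1 + 1) / 2 = k + 1 by omega]
    split_ifs <;> ring
  have hfilter : {j ∈ Icc 1 (2 * k + 1) | j ≤ k + 1} = Icc 1 (k + 1) := by
    ext j; simp only [mem_filter, mem_Icc]; omega
  rw [sum_congr rfl fun j _ ↦ hsplit j, sum_add_distrib, ← sum_filter, hfilter, ← mul_sum,
    ← mul_sum, ← mul_sum, sum_Icc_neg_one_pow_mul_linear]
  push_cast
  ring

theorem addOrderOf_sum_nhEntry_col (hp : n.Prime) (hk : n = 2 * k + 1) (j : ℕ) :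
    addOrderOf ((∑ i ∈ Icc 1 n, nhEntry n i j : ℤ) : ZMod (3 * n ^ 2)) = 3 * n ^ 2 := by
  have hn : (n : ℤ) = 2 * k + 1 := by exact_mod_cast hk
  obtain ⟨c, hc, h3, hnc⟩ : ∃ c : ℤ, ∑ i ∈ Icc 1 n, nhEntry n i j = (-1) ^ (j + 1) * c ∧
      3 ∣ c - 1 ∧ (n : ℤ) ∣ 2 * c + 1 := by
    rcases le_or_gt j (k + 1) with hjk | hjk
    · refine ⟨_, sum_nhEntry_col_of_le hk hjk, ⟨n * (j - 1) + k, by ring⟩, ⟨6 * j - 3, ?_⟩⟩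
      rw [hn]; ring
    · refine ⟨_, sum_nhEntry_col_of_lt hk hjk, ⟨n * j - k - 1, by ring⟩, ⟨6 * j - 3, ?_⟩⟩
      rw [hn]; ring
  have hn1 : ¬ (n : ℤ) ∣ c :=
    Int.not_dvd_of_dvd_mul_sub (d := -1) (by simpa using hnc) (by norm_num)
      (by rw [abs_neg, abs_one]; exact_mod_cast hp.one_lt)
  rw [hc]
  refine (addOrderOf_neg_one_pow_mul_intCast hp Nat.prime_three _ ?_ ?_).resolve_right
    fun h ↦ hn1 h.2
  · omega
  · exact fun h ↦ hn1 (dvd_trans (dvd_pow_self _ two_ne_zero) h)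

theorem addOrderOf_sum_nhEntry_row (hp : n.Prime) (hk : n = 2 * k + 1) {i : ℕ}
    (hi : i ∈ Icc 1 n) :
    addOrderOf ((∑ j ∈ Icc 1 n, nhEntry n i j : ℤ) : ZMod (3 * n ^ 2)) = 3 * n ^ 2 ∨
      addOrderOf ((∑ j ∈ Icc 1 n, nhEntry n i j : ℤ) : ZMod (3 * n ^ 2)) = 3 * n := by
  have hn : (n : ℤ) = 2 * k + 1 := by exact_mod_cast hk
  have hn3 : (3 : ℤ) ≤ n := by have := hp.two_le; omega
  have hi' : 1 ≤ (i : ℤ) ∧ (i : ℤ) ≤ n := by simp only [mem_Icc] at hi; omega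
  obtain ⟨c, d, hc, h3, hnd, hd, hdn⟩ : ∃ c d : ℤ,
      ∑ j ∈ Icc 1 n, nhEntry n i j = (-1) ^ (i + 1) * c ∧ 3 ∣ c - 1 ∧
        (n : ℤ) ^ 2 ∣ 2 * c - d ∧ d ≠ 0 ∧ |d| < n ^ 2 := by
    rw [sum_nhEntry_row hk, sum_Icc_neg_one_pow]
    by_cases hk2 : Even (k + 1)
    · refine ⟨3 * n * (k + 1) + 1 - 3 * i, 3 * n + 2 - 6 * i, by rw [if_pos hk2]; ring,
        ⟨n * (k + 1) - i, by ring⟩, ⟨3, by rw [hn]; ring⟩, by omega,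
        abs_lt.mpr ⟨by nlinarith, by nlinarith⟩⟩
    · refine ⟨3 * n * k + 3 * i - 2, 6 * i - 3 * n - 4, by rw [if_neg hk2]; ring,
        ⟨n * k + i - 1, by ring⟩, ⟨3, by rw [hn]; ring⟩, by omega,
        abs_lt.mpr ⟨by nlinarith, by nlinarith⟩⟩
  rw [hc]
  refine (addOrderOf_neg_one_pow_mul_intCast hp Nat.prime_three _ ?_ ?_).imp_right fun h ↦ h.1
  · omega
  · exact Int.not_dvd_of_dvd_mul_sub hnd hd hdn

end

/-- Proposition 5.10 (key computation): for the matrix of the globally simple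
NH_{n²}(n;n) over Z_{3n²}, n an odd prime, every column total sum has additive
order 3n² (i.e. it is a unit), and every row total sum has additive order 3n² or 3n. -/
theorem stmt17 (n : ℕ) (hp : n.Prime) (hodd : Odd n)
    (A : ℕ → ℕ → ZMod (3 * n ^ 2))
    (hA : ∀ i ∈ Finset.Icc 1 n, ∀ j ∈ Finset.Icc 1 n,
      (j ≤ (n + 1) / 2 →
        A i j = (((-1) ^ (i + j) * (3 * (n : ℤ) * ((j : ℤ) - 1) + 3 * ((i : ℤ) - 1) + 1) : ℤ)
          : ZMod (3 * n ^ 2))) ∧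
      ((n + 3) / 2 ≤ j →
        A i j = (((-1) ^ (i + j) * (3 * (n : ℤ) * j - 3 * (i : ℤ) + 1) : ℤ)
          : ZMod (3 * n ^ 2)))) :
    (∀ j ∈ Finset.Icc 1 n,
      addOrderOf (∑ i ∈ Finset.Icc 1 n, A i j) = 3 * n ^ 2) ∧
    (∀ i ∈ Finset.Icc 1 n,
      addOrderOf (∑ j ∈ Finset.Icc 1 n, A i j) = 3 * n ^ 2 ∨
      addOrderOf (∑ j ∈ Finset.Icc 1 n, A i j) = 3 * n) := by
  obtain ⟨k, hk⟩ := hodd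
  have hentry : ∀ i ∈ Icc 1 n, ∀ j ∈ Icc 1 n, A i j = nhEntry n i j := by
    intro i hi j hj
    rw [nhEntry]
    split_ifs with hj'
    · exact (hA i hi j hj).1 hj'
    · exact (hA i hi j hj).2 (by omega)
  refine ⟨fun j hj ↦ ?_, fun i hi ↦ ?_⟩
  · rw [sum_congr rfl fun i hi ↦ hentry i hi j hj, ← Int.cast_sum]
    exact addOrderOf_sum_nhEntry_col hp hk j
  · rw [sum_congr rfl fun j hj ↦ hentry i hi j hj, ← Int.cast_sum]
    exact addOrderOf_sum_nhEntry_row hp hk hi
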